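/- The map α ↦ α̂ on pseudo-compositions, defined by α̂ = (α₁, (α₂,...,α_k)^), where ^ is the type A peak-composition collapsing map on the composition (α₂,...,α_k), is a surjection from pseudo-compositions of n onto type B peak pseudo-compositions of n. -/

import Mathlib

/-- The type A collapsing map on compositions: each maximal run of consecutive 1's
is merged into the next part to the right (a trailing run of `r` ones becomes `r`). -/
def collapse : List ℕ → List ℕ
  | [] => []
  | 1 :: rest =>
    match collapse rest with
    | [] => [1]
    | b :: t => (b + 1) :: t
  | a :: rest => a :: collapse rest

/-- The type B collapsing map on pseudo-compositions: the first part is kept and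
the collapsing map is applied to the remaining parts. -/
def collapseB : List ℕ → List ℕ
  | [] => []
  | a :: t => a :: collapse t

/-- A pseudo-composition of `n`: first part `≥ 0`, remaining parts positive, sum `n`. -/
def IsPseudoComp (n : ℕ) (l : List ℕ) : Prop :=
  (∀ x ∈ l.tail, 0 < x) ∧ l.sum = n

/-- A type B peak pseudo-composition of `n`: a pseudo-composition whose middle
parts all exceed 1. -/
def IsPeakPseudoCompB (n : ℕ) (l : List ℕ) : Prop :=
  IsPseudoComp n l ∧ ∀ i, 0 < i → i + 1 < l.length → 1 < l.getD i 0

/-!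
Collapsing only merges runs of ones into the part to their right, so it preserves the sum, and every
part of `collapse α` except the last is either a part `≥ 2` of `α` or a positive part increased by
at least one. Conversely a type B peak pseudo-composition contains no `1` among its middle parts,
so `collapseB` fixes it and it is its own preimage.
-/

def OneLtExceptLast (l : List ℕ) : Prop :=
  ∀ i, i + 1 < l.length → 1 < l.getD i 0

lemma collapse_cons_of_ne_one {a : ℕ} (ha : a ≠ 1) (l : List ℕ) :
    collapse (a :: l) = a :: collapse l := by
  match a, ha with
  | 0, _ => rfl
  | _ + 2, _ => rfl

lemma collapse_one_cons_of_collapse_eq_cons {l t : List ℕ} {b : ℕ} (h : collapse l = b :: t) :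
    collapse (1 :: l) = (b + 1) :: t := by
  simp only [collapse, h]

lemma collapse_eq_nil_iff {l : List ℕ} : collapse l = [] ↔ l = [] := by
  refine ⟨fun h => ?_, by rintro rfl; rfl⟩
  rcases l with _ | ⟨a, l⟩
  · rfl
  · unfold collapse at h
    split at h <;> (try split at h) <;> simp_all

theorem sum_collapse_eq_sum (l : List ℕ) : (collapse l).sum = l.sum := by
  induction l with
  | nil => rfl
  | cons a l ih =>
    rcases eq_or_ne a 1 with rfl | ha
    · cases hc : collapse l with
      | nil =>
        obtain rfl := collapse_eq_nil_iff.mp hc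
        rfl
      | cons b t =>
        rw [hc] at ih
        simp only [collapse_one_cons_of_collapse_eq_cons hc, List.sum_cons, ← ih]
        omega
    · simp [collapse_cons_of_ne_one ha, ih]

theorem pos_of_mem_collapse {l : List ℕ} (hl : ∀ x ∈ l, 0 < x) : ∀ x ∈ collapse l, 0 < x := by
  induction l with
  | nil => simp [collapse]
  | cons a l ih =>
    have ih := ih fun x hx => hl x (List.mem_cons_of_mem a hx)
    rcases eq_or_ne a 1 with rfl | ha
    · cases hc : collapse l with
      | nil => obtain rfl := collapse_eq_nil_iff.mp hc; simp [collapse]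
      | cons b t =>
        rw [hc] at ih
        simp only [collapse_one_cons_of_collapse_eq_cons hc, List.mem_cons, forall_eq_or_imp]
        exact ⟨b.succ_pos, fun x hx => ih x (List.mem_cons_of_mem b hx)⟩
    · simpa [collapse_cons_of_ne_one ha] using ⟨hl a List.mem_cons_self, ih⟩

theorem oneLtExceptLast_collapse {l : List ℕ} (hl : ∀ x ∈ l, 0 < x) :
    OneLtExceptLast (collapse l) := by
  induction l with
  | nil => simp [OneLtExceptLast, collapse]
  | cons a l ih =>
    have hl' : ∀ x ∈ l, 0 < x := fun x hx => hl x (List.mem_cons_of_mem a hx)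
    have ih := ih hl'
    rcases eq_or_ne a 1 with rfl | ha
    · cases hc : collapse l with
      | nil => obtain rfl := collapse_eq_nil_iff.mp hc; simp [OneLtExceptLast, collapse]
      | cons b t =>
        rw [hc] at ih
        have hb : 0 < b := pos_of_mem_collapse hl' b (hc ▸ List.mem_cons_self)
        rw [collapse_one_cons_of_collapse_eq_cons hc]
        rintro (_ | i) hi
        · simpa using hb
        · simpa using ih (i + 1) (by simpa using hi)
    · have ha : 1 < a := by have := hl a List.mem_cons_self; omega
      rw [collapse_cons_of_ne_one ha.ne']
      rintro (_ | i) hi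
      · simpa using ha
      · simpa using ih i (by simpa using hi)

theorem OneLtExceptLast.collapse_eq {l : List ℕ} (hl : OneLtExceptLast l) : collapse l = l := by
  induction l with
  | nil => rfl
  | cons a l ih =>
    rcases l with _ | ⟨b, l⟩
    · rcases eq_or_ne a 1 with rfl | ha
      · rfl
      · exact collapse_cons_of_ne_one ha []
    · have ha : 1 < a := by simpa using hl 0 (by simp)
      rw [collapse_cons_of_ne_one ha.ne', ih fun i hi => by simpa using hl (i + 1) (by simpa using hi)]

theorem isPeakPseudoCompB_cons_iff {n a : ℕ} {l : List ℕ} :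
    IsPeakPseudoCompB n (a :: l) ↔ IsPseudoComp n (a :: l) ∧ OneLtExceptLast l := by
  refine and_congr_right fun _ => ⟨fun h i hi => ?_, fun h i hi₀ hi => ?_⟩
  · simpa using h (i + 1) i.succ_pos (by simpa using hi)
  · obtain ⟨i, rfl⟩ := Nat.exists_eq_add_one_of_ne_zero hi₀.ne'
    simpa using h i (by simpa using hi)

theorem IsPseudoComp.isPeakPseudoCompB_collapseB {n : ℕ} {l : List ℕ} (hl : IsPseudoComp n l) :
    IsPeakPseudoCompB n (collapseB l) := by
  obtain ⟨hpos, hsum⟩ := hl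
  rcases l with _ | ⟨a, l⟩
  · exact ⟨⟨hpos, hsum⟩, by simp [collapseB]⟩
  · refine isPeakPseudoCompB_cons_iff.mpr
      ⟨⟨pos_of_mem_collapse hpos, ?_⟩, oneLtExceptLast_collapse hpos⟩
    rwa [List.sum_cons, sum_collapse_eq_sum]

theorem IsPeakPseudoCompB.collapseB_eq {n : ℕ} {l : List ℕ} (hl : IsPeakPseudoCompB n l) :
    collapseB l = l := by
  rcases l with _ | ⟨a, l⟩
  · rfl
  · exact congrArg (a :: ·) (isPeakPseudoCompB_cons_iff.mp hl).2.collapse_eq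

/-- The map `α ↦ α̂` is a surjection from pseudo-compositions of `n` onto type B
peak pseudo-compositions of `n`. -/
theorem stmt16 (n : ℕ) :
    (∀ l : List ℕ, IsPseudoComp n l → IsPeakPseudoCompB n (collapseB l)) ∧
    (∀ p : List ℕ, IsPeakPseudoCompB n p →
      ∃ l : List ℕ, IsPseudoComp n l ∧ collapseB l = p) :=
  ⟨fun _ hl => hl.isPeakPseudoCompB_collapseB, fun p hp => ⟨p, hp.1, hp.collapseB_eq⟩⟩
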